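/- For every matching M between bids B and asks A and for every natural number p, the total traded quantity Q(M) is at most Q(B_{≥p}) + Q(A_{≤p}), where B_{≥p} is the list of bids in B with limit price at least p and A_{≤p} is the list of asks in A with limit price at most p. That is, no matching can exceed the sum of demand and supply at any price. -/

import Mathlib

structure Bid where
  id : ℕ
  timestamp : ℕ
  quantity : ℕ
  price : ℕ
deriving DecidableEq

structure Ask where
  id : ℕ
  timestamp : ℕ
  quantity : ℕ
  price : ℕ
deriving DecidableEq

structure Transaction where
  bid : Bid
  ask : Ask
  quantity : ℕ
  price : ℕ
deriving DecidableEq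

/-- Total traded quantity of a list of transactions. -/
def Qty (M : List Transaction) : ℕ := (M.map Transaction.quantity).sum

/-- Total traded quantity of bid `b` in `M`. -/
def QtyBid (b : Bid) (M : List Transaction) : ℕ :=
  ((M.filter (fun m => m.bid == b)).map Transaction.quantity).sum

/-- Total traded quantity of ask `a` in `M`. -/
def QtyAsk (a : Ask) (M : List Transaction) : ℕ :=
  ((M.filter (fun m => m.ask == a)).map Transaction.quantity).sum

/-- Total traded quantity between bid `b` and ask `a` in `M`. -/
def QtyBidAsk (b : Bid) (a : Ask) (M : List Transaction) : ℕ :=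
  ((M.filter (fun m => m.bid == b && m.ask == a)).map Transaction.quantity).sum

/-- Sum of quantities of a list of bids. -/
def QB (B : List Bid) : ℕ := (B.map Bid.quantity).sum

/-- Sum of quantities of a list of asks. -/
def QA (A : List Ask) : ℕ := (A.map Ask.quantity).sum

/-- `M` is a matching between bids `B` and asks `A`. -/
def Matching (B : List Bid) (A : List Ask) (M : List Transaction) : Prop :=
  (∀ m ∈ M, m.ask.price ≤ m.bid.price) ∧
  (∀ m ∈ M, m.bid ∈ B) ∧
  (∀ m ∈ M, m.ask ∈ A) ∧
  (∀ b ∈ B, QtyBid b M ≤ b.quantity) ∧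
  (∀ a ∈ A, QtyAsk a M ≤ a.quantity)

/-- Individual rationality. -/
def IsIR (M : List Transaction) : Prop :=
  ∀ m ∈ M, m.ask.price ≤ m.price ∧ m.price ≤ m.bid.price

/-- Uniformity: all trade prices equal. -/
def IsUniform (M : List Transaction) : Prop :=
  ∀ m1 ∈ M, ∀ m2 ∈ M, m1.price = m2.price

/-- `b1` is more competitive than `b2`. -/
def MoreCompetitiveBid (b1 b2 : Bid) : Prop :=
  b2.price < b1.price ∨ (b1.price = b2.price ∧ b1.timestamp < b2.timestamp)

/-- `a1` is more competitive than `a2`. -/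
def MoreCompetitiveAsk (a1 a2 : Ask) : Prop :=
  a1.price < a2.price ∨ (a1.price = a2.price ∧ a1.timestamp < a2.timestamp)

def FairOnBids (B : List Bid) (M : List Transaction) : Prop :=
  ∀ b1 ∈ B, ∀ b2 ∈ B, MoreCompetitiveBid b1 b2 → 1 ≤ QtyBid b2 M →
    QtyBid b1 M = b1.quantity

def FairOnAsks (A : List Ask) (M : List Transaction) : Prop :=
  ∀ a1 ∈ A, ∀ a2 ∈ A, MoreCompetitiveAsk a1 a2 → 1 ≤ QtyAsk a2 M →
    QtyAsk a1 M = a1.quantity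

def IsFair (B : List Bid) (A : List Ask) (M : List Transaction) : Prop :=
  FairOnBids B M ∧ FairOnAsks A M

/-- "at least as competitive as" order on bids (for sorting, most competitive first). -/
def BidGE (b1 b2 : Bid) : Prop := ¬ MoreCompetitiveBid b2 b1

/-- "at least as competitive as" order on asks (for sorting, most competitive first). -/
def AskGE (a1 a2 : Ask) : Prop := ¬ MoreCompetitiveAsk a2 a1

lemma qty_split (M : List Transaction) (p : Transaction → Bool) :
    Qty M = Qty (M.filter p) + Qty (M.filter (fun m => !(p m))) := by
  induction M with
  | nil => simp [Qty]
  | cons m M ih =>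
    by_cases h : p m <;> simp [Qty, List.filter_cons, h] at ih ⊢ <;> omega

lemma qty_sublist {M M' : List Transaction} (h : List.Sublist M' M) : Qty M' ≤ Qty M :=
  List.Sublist.sum_le_sum (h.map Transaction.quantity) (fun _ _ => Nat.zero_le _)

lemma qtyBid_filter_le (b : Bid) (M : List Transaction) (p : Transaction → Bool) :
    QtyBid b (M.filter p) ≤ QtyBid b M :=
  qty_sublist ((List.filter_sublist : List.Sublist (M.filter p) M).filter _)

lemma qtyAsk_filter_le (a : Ask) (M : List Transaction) (p : Transaction → Bool) :
    QtyAsk a (M.filter p) ≤ QtyAsk a M :=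
  qty_sublist ((List.filter_sublist : List.Sublist (M.filter p) M).filter _)

lemma qty_le_QB (B : List Bid) (M : List Transaction) (hnd : B.Nodup)
    (hmem : ∀ m ∈ M, m.bid ∈ B) (hq : ∀ b ∈ B, QtyBid b M ≤ b.quantity) :
    Qty M ≤ QB B := by
  induction B generalizing M with
  | nil =>
    have : M = [] := List.eq_nil_iff_forall_not_mem.mpr (fun m hm => by simpa using hmem m hm)
    simp [this, Qty]
  | cons b B ih =>
    have hsplit := qty_split M (fun m => m.bid == b)
    have h1 : Qty (M.filter (fun m => m.bid == b)) ≤ b.quantity := hq b (by simp)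
    have h2 : Qty (M.filter (fun m => !(m.bid == b))) ≤ QB B := by
      apply ih _ hnd.of_cons
      · intro m hm
        have hmM := (List.mem_filter.mp hm).1
        have hne := (List.mem_filter.mp hm).2
        have := hmem m hmM
        simp at hne
        simp [hne] at this
        exact this
      · intro b' hb'
        exact le_trans (qtyBid_filter_le b' M _) (hq b' (by simp [hb']))
    simp only [QB, List.map_cons, List.sum_cons] at *
    omega

lemma qty_le_QA (A : List Ask) (M : List Transaction) (hnd : A.Nodup)
    (hmem : ∀ m ∈ M, m.ask ∈ A) (hq : ∀ a ∈ A, QtyAsk a M ≤ a.quantity) :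
    Qty M ≤ QA A := by
  induction A generalizing M with
  | nil =>
    have : M = [] := List.eq_nil_iff_forall_not_mem.mpr (fun m hm => by simpa using hmem m hm)
    simp [this, Qty]
  | cons a A ih =>
    have hsplit := qty_split M (fun m => m.ask == a)
    have h1 : Qty (M.filter (fun m => m.ask == a)) ≤ a.quantity := hq a (by simp)
    have h2 : Qty (M.filter (fun m => !(m.ask == a))) ≤ QA A := by
      apply ih _ hnd.of_cons
      · intro m hm
        have hmM := (List.mem_filter.mp hm).1
        have hne := (List.mem_filter.mp hm).2
        have := hmem m hmM
        simp at hne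
        simp [hne] at this
        exact this
      · intro a' ha'
        exact le_trans (qtyAsk_filter_le a' M _) (hq a' (by simp [ha']))
    simp only [QA, List.map_cons, List.sum_cons] at *
    omega

theorem statement_2 (B : List Bid) (A : List Ask) (M : List Transaction)
    (hB : (B.map Bid.id).Nodup) (hA : (A.map Ask.id).Nodup)
    (hM : Matching B A M) (p : ℕ) :
    Qty M ≤ QB (B.filter (fun b => p ≤ b.price)) +
            QA (A.filter (fun a => a.price ≤ p)) := by
  obtain ⟨hpr, hbm, ham, hqb, hqa⟩ := hM
  have hBnd : B.Nodup := hB.of_map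
  have hAnd : A.Nodup := hA.of_map
  have hsplit := qty_split M (fun m => p ≤ m.bid.price)
  have h1 : Qty (M.filter (fun m => p ≤ m.bid.price)) ≤
      QB (B.filter (fun b => p ≤ b.price)) := by
    apply qty_le_QB _ _ (hBnd.filter _)
    · intro m hm
      rw [List.mem_filter] at hm ⊢
      exact ⟨hbm m hm.1, hm.2⟩
    · intro b hb
      exact le_trans (qtyBid_filter_le b M _) (hqb b (List.mem_of_mem_filter hb))
  have h2 : Qty (M.filter (fun m => !(p ≤ m.bid.price))) ≤
      QA (A.filter (fun a => a.price ≤ p)) := by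
    apply qty_le_QA _ _ (hAnd.filter _)
    · intro m hm
      rw [List.mem_filter] at hm ⊢
      refine ⟨ham m hm.1, ?_⟩
      have := hpr m hm.1
      have h := hm.2
      simp at h ⊢
      omega
    · intro a ha
      exact le_trans (qtyAsk_filter_le a M _) (hqa a (List.mem_of_mem_filter ha))
  omega
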